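/- arXiv:1110.5666 — 2 statements merged into one kernel-verified Lean document; each statement's English description precedes it below -/
import Mathlib

section
/- With delta_g^{(2c)} defined by delta_1^{(2c)} = d-c and delta_{g+1}^{(2c)} = sum_{a=0}^{d-1}(d - max(a,c)) delta_g^{(2a)}, and with p = 2d+1, one has delta_3^{(0)} = (p-1)p(p+1)(p^2+1)/240. -/
/-!
Unfolding the recursion, `δ₃⁽⁰⁾ = ∑_{a,b<d} (d - a)(d - max a b)(d - b)`. Reflecting both indices
(`i = d - 1 - a`, `j = d - 1 - b`) turns this into `∑_{i,j<d} (i+1)(j+1)(min i j + 1)`; growing the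
square `range d ×ˢ range d` by one row and one column adds `2(d+1)∑_{i<d}(i+1)² + (d+1)³`, which gives
the closed form `d(d+1)(2d+1)(2d²+2d+1)/30`, i.e. `(p-1)p(p+1)(p²+1)/240`.
-/

/-- `delta d g c` is `δ_g^{(2c)}` for `p = 2d+1`, with `δ_0^{(0)} = 1`, `δ_0^{(2c)} = 0` for
`c ≠ 0`, and `δ_{g+1}^{(2c)} = ∑_{a=0}^{d-1} (d - max a c) δ_g^{(2a)}`; in particular
`δ_1^{(2c)} = d - c`. -/
def delta (d : ℕ) : ℕ → ℕ → ℚ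
  | 0, c => if c = 0 then 1 else 0
  | g + 1, c => ∑ a ∈ Finset.range d, ((d : ℚ) - max a c) * delta d g a

open Finset

lemma sum_range_succ_sq (n : ℕ) :
    ∑ i ∈ range n, ((i : ℚ) + 1) ^ 2 = (n : ℚ) * (n + 1) * (2 * n + 1) / 6 := by
  induction n with
  | zero => simp
  | succ n ih => rw [sum_range_succ, ih]; push_cast; ring

lemma sum_range_sum_range_mul_min_succ (n : ℕ) :
    ∑ i ∈ range n, ∑ j ∈ range n, ((i : ℚ) + 1) * (j + 1) * (min (i : ℚ) j + 1)
      = (n : ℚ) * (n + 1) * (2 * n + 1) * (2 * n ^ 2 + 2 * n + 1) / 30 := by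
  induction n with
  | zero => simp
  | succ n ih =>
    have hborder : ∀ i ∈ range n,
        ((i : ℚ) + 1) * (n + 1) * (min (i : ℚ) n + 1) = (n + 1) * ((i : ℚ) + 1) ^ 2 := by
      intro i hi
      rw [min_eq_left (by exact_mod_cast (mem_range.1 hi).le)]
      ring
    have hborder' : ∀ j ∈ range n,
        ((n : ℚ) + 1) * (j + 1) * (min (n : ℚ) j + 1) = (n + 1) * ((j : ℚ) + 1) ^ 2 := by
      intro j hj
      rw [min_comm, ← hborder j hj]
      ring
    simp only [sum_range_succ, sum_add_distrib, sum_congr rfl hborder, sum_congr rfl hborder',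
      ← mul_sum, ih, sum_range_succ_sq, min_self]
    push_cast
    ring

lemma cast_sub_one_sub_of_lt {d i : ℕ} (hi : i < d) : ((d - 1 - i : ℕ) : ℚ) = d - 1 - i := by
  rw [Nat.sub_sub, Nat.cast_sub (by omega)]
  push_cast
  ring

lemma sum_sub_max_eq_sum_min_succ (d : ℕ) :
    ∑ a ∈ range d, ((d : ℚ) - a) * ∑ b ∈ range d, ((d : ℚ) - max (b : ℚ) a) * (d - b)
      = ∑ i ∈ range d, ∑ j ∈ range d, ((i : ℚ) + 1) * (j + 1) * (min (i : ℚ) j + 1) := by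
  rw [← sum_range_reflect]
  refine sum_congr rfl fun i hi => ?_
  rw [← sum_range_reflect, mul_sum]
  refine sum_congr rfl fun j hj => ?_
  rw [cast_sub_one_sub_of_lt (mem_range.1 hi), cast_sub_one_sub_of_lt (mem_range.1 hj),
    max_sub_sub_left, min_comm (j : ℚ)]
  ring

lemma delta_one {d : ℕ} (hd : 0 < d) (c : ℕ) : delta d 1 c = d - c := by
  simp [delta, mul_ite, sum_ite_eq', hd]

lemma delta_two (d c : ℕ) :
    delta d 2 c = ∑ b ∈ range d, ((d : ℚ) - max (b : ℚ) c) * (d - b) := by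
  rw [delta]
  refine sum_congr rfl fun b hb => ?_
  rw [delta_one (Nat.zero_lt_of_lt (mem_range.1 hb)), Nat.cast_max]

theorem delta_three_general (d : ℕ) (p : ℚ) (hp : p = 2 * d + 1) :
    delta d 3 0 = (p - 1) * p * (p + 1) * (p ^ 2 + 1) / 240 := by
  have hunfold : delta d 3 0 = ∑ a ∈ range d, ((d : ℚ) - a) * delta d 2 a := by
    simp only [delta, Nat.zero_le, sup_of_le_left]
  rw [hunfold]
  simp only [delta_two]
  rw [sum_sub_max_eq_sum_min_succ, sum_range_sum_range_mul_min_succ, hp]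
  ring

theorem delta_three (d : ℕ) (hd : 1 ≤ d) (p : ℚ) (hp : p = 2 * d + 1) :
    delta d 3 0 = (p - 1) * p * (p + 1) * (p ^ 2 + 1) / 240 :=
  delta_three_general d p hp
end

section
/- With delta_g^{(2c)} defined by the recursion delta_1^{(2c)} = d-c and delta_{g+1}^{(2c)} = sum_{a=0}^{d-1}(d - max(a,c)) delta_g^{(2a)}, and hat-K = sum_{n=0}^{d-1}(-1)^n (d-n) e_{2n} in the Verlinde algebra V_p, one has for all g >= 0: hat-K^g = sum_{c=0}^{d-1} (-1)^c delta_g^{(2c)} e_{2c}, where delta_0^{(0)} = 1 and delta_0^{(2c)} = 0 for c ≠ 0. Equivalently, (-1)^c delta_g^{(2c)} = M(hat-K^g)_{c,0}. -/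
/-- Chebyshev polynomials of the second kind: `e 0 = 1`, `e 1 = z`,
`e (n+2) = z * e (n+1) - e n`. -/
noncomputable def cheb (K : Type*) [Field K] : ℕ → Polynomial K
  | 0 => 1
  | 1 => Polynomial.X
  | n + 2 => Polynomial.X * cheb K (n + 1) - cheb K n

/-! Since `e_{2d} = (e_d + e_{d-1})(e_d - e_{d-1})` vanishes in `V_p`, and
`z² e_{2c} = e_{2c+2} + 2 e_{2c} + e_{2c-2}` makes the sums telescope, one gets
`z² · ∑_{c<d} (-1)^c (d - max a c) e_{2c} = (-1)^a e_{2a}` in `V_p` for every `a < d`.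
For `a = 0` this says that `K̂` is the inverse of `z²`; weighted by `δ_g^{(2a)}` and summed
over `a` it says that `z²` maps `∑_c (-1)^c δ_{g+1}^{(2c)} e_{2c}` to
`∑_c (-1)^c δ_g^{(2c)} e_{2c}`.
Hence both sides of the claim are multiplied by `K̂` as `g` increases. -/

open Polynomial Finset

section

variable {K : Type*} [Field K]

theorem cheb_zero : cheb K 0 = 1 := rfl

theorem cheb_add_two (n : ℕ) : cheb K (n + 2) = X * cheb K (n + 1) - cheb K n := by
  rw [cheb]

theorem cheb_add_add_two (m : ℕ) : ∀ n : ℕ,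
    cheb K (m + n + 2) = cheb K (m + 1) * cheb K (n + 1) - cheb K m * cheb K n
  | 0 => by simp [cheb, mul_comm]
  | 1 => by
    rw [cheb_add_two (m + 1), cheb_add_two m, cheb_add_two 0]
    simp only [cheb]
    ring
  | n + 2 => by
    have h₁ := cheb_add_add_two m n
    have h₂ := cheb_add_add_two m (n + 1)
    rw [show m + (n + 2) + 2 = m + n + 2 + 2 by omega, cheb_add_two (m + n + 2),
      show m + n + 2 + 1 = m + (n + 1) + 2 by omega, h₂, h₁, cheb_add_two (n + 1),
      cheb_add_two n]
    ring

theorem cheb_two_mul_add_two (m : ℕ) :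
    cheb K (2 * m + 2) = (cheb K (m + 1) + cheb K m) * (cheb K (m + 1) - cheb K m) := by
  rw [two_mul, cheb_add_add_two]
  ring

theorem X_sq_mul_cheb_add_two (n : ℕ) :
    X ^ 2 * cheb K (n + 2) = cheb K (n + 4) + 2 * cheb K (n + 2) + cheb K n := by
  rw [cheb_add_two (n + 2), cheb_add_two (n + 1), cheb_add_two n]
  ring

theorem X_sq_mul_sum_range_succ_neg_one_pow_mul_cheb (a : ℕ) :
    X ^ 2 * ∑ c ∈ range (a + 1), (-1) ^ c * cheb K (2 * c)
      = (-1) ^ a * cheb K (2 * a) - (-1) ^ (a + 1) * cheb K (2 * (a + 1)) := by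
  induction a with
  | zero =>
    simp only [sum_range_one, zero_add, mul_one, cheb]
    ring
  | succ a ih =>
    rw [sum_range_succ, mul_add, ih, show 2 * (a + 1 + 1) = 2 * a + 2 + 2 by ring,
      show 2 * (a + 1) = 2 * a + 2 by ring]
    linear_combination (-1) ^ (a + 1) * X_sq_mul_cheb_add_two (K := K) (2 * a)

noncomputable def altEvenSum (d : ℕ) (v : ℕ → K) : K[X] :=
  ∑ c ∈ range d, C ((-1) ^ c * v c) * cheb K (2 * c)

def deltaStep (d : ℕ) (v : ℕ → K) (c : ℕ) : K :=
  ∑ a ∈ range d, ((d : K) - (max a c : ℕ)) * v a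

theorem altEvenSum_succ_sub_max {a d : ℕ} (h : a ≤ d) :
    altEvenSum (d + 1) (fun c => ((d + 1 : ℕ) : K) - (max a c : ℕ))
      = altEvenSum d (fun c => (d : K) - (max a c : ℕ))
        + ∑ c ∈ range (d + 1), (-1) ^ c * cheb K (2 * c) := by
  simp only [altEvenSum, sum_range_succ _ d, max_eq_right h]
  rw [← add_assoc, ← sum_add_distrib]
  congr 1
  · refine sum_congr rfl fun c _ => ?_
    simp only [map_mul, map_sub, map_pow, map_neg, map_one, map_natCast]
    push_cast
    ring
  · simp

theorem X_sq_mul_altEvenSum_sub_max {a d : ℕ} (h : a ≤ d) :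
    X ^ 2 * altEvenSum d (fun c => (d : K) - (max a c : ℕ))
      = (-1) ^ a * cheb K (2 * a) - (-1) ^ d * cheb K (2 * d) := by
  induction d, h using Nat.le_induction with
  | base =>
    rw [sub_self, altEvenSum, sum_eq_zero fun c hc => by
      rw [max_eq_left (mem_range.1 hc).le, sub_self, mul_zero, map_zero, zero_mul], mul_zero]
  | succ d had ih =>
    rw [altEvenSum_succ_sub_max had, mul_add, ih,
      X_sq_mul_sum_range_succ_neg_one_pow_mul_cheb]
    ring

theorem altEvenSum_deltaStep (d : ℕ) (v : ℕ → K) :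
    altEvenSum d (deltaStep d v)
      = ∑ a ∈ range d, C (v a) * altEvenSum d (fun c => (d : K) - (max a c : ℕ)) := by
  simp only [altEvenSum, deltaStep, mul_sum, sum_mul, map_sum]
  rw [sum_comm]
  refine sum_congr rfl fun a _ => sum_congr rfl fun c _ => ?_
  simp only [map_mul]
  ring

theorem X_sq_mul_altEvenSum_deltaStep (d : ℕ) (v : ℕ → K) :
    X ^ 2 * altEvenSum d (deltaStep d v)
      = altEvenSum d v - C (∑ a ∈ range d, v a) * ((-1) ^ d * cheb K (2 * d)) := by
  rw [altEvenSum_deltaStep, mul_sum, map_sum, sum_mul, altEvenSum, ← sum_sub_distrib]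
  refine sum_congr rfl fun a ha => ?_
  rw [mul_left_comm, X_sq_mul_altEvenSum_sub_max (mem_range.1 ha).le]
  simp only [map_mul, map_pow, map_neg, map_one]
  ring

theorem cheb_two_mul_mem_span {d : ℕ} (hd : 1 ≤ d) :
    cheb K (2 * d) ∈ Ideal.span {cheb K d - cheb K (d - 1)} := by
  obtain ⟨m, rfl⟩ := Nat.exists_eq_add_of_le' hd
  rw [Ideal.mem_span_singleton, Nat.add_sub_cancel, mul_add_one, cheb_two_mul_add_two]
  exact dvd_mul_left _ _

theorem mk_altEvenSum_deltaStep {d : ℕ} (hd : 1 ≤ d) (v : ℕ → K) :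
    Ideal.Quotient.mk (Ideal.span {cheb K d - cheb K (d - 1)}) (altEvenSum d (deltaStep d v))
      = Ideal.Quotient.mk (Ideal.span {cheb K d - cheb K (d - 1)})
          (altEvenSum d (fun n => (d : K) - n))
        * Ideal.Quotient.mk (Ideal.span {cheb K d - cheb K (d - 1)}) (altEvenSum d v) := by
  set mk := Ideal.Quotient.mk (Ideal.span {cheb K d - cheb K (d - 1)})
  have hvanish : mk (cheb K (2 * d)) = 0 :=
    Ideal.Quotient.eq_zero_iff_mem.2 (cheb_two_mul_mem_span hd)
  have hinv : mk (X ^ 2) * mk (altEvenSum d (fun n => (d : K) - n)) = 1 := by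
    have h := X_sq_mul_altEvenSum_sub_max (K := K) (Nat.zero_le d)
    simp only [Nat.zero_max, pow_zero, mul_zero, one_mul, cheb_zero] at h
    rw [← map_mul, h, map_sub, map_one, map_mul, hvanish, mul_zero, sub_zero]
  have hstep : mk (X ^ 2) * mk (altEvenSum d (deltaStep d v)) = mk (altEvenSum d v) := by
    rw [← map_mul, X_sq_mul_altEvenSum_deltaStep, map_sub, map_mul, map_mul, hvanish,
      mul_zero, mul_zero, sub_zero]
  calc mk (altEvenSum d (deltaStep d v))
      = mk (altEvenSum d (fun n => (d : K) - n)) * mk (X ^ 2)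
          * mk (altEvenSum d (deltaStep d v)) := by
        rw [mul_comm (mk _) (mk (X ^ 2)), hinv, one_mul]
    _ = _ := by rw [mul_assoc, hstep]

variable [Algebra ℚ K]

theorem algebraMap_delta_succ (d g : ℕ) :
    (fun c => algebraMap ℚ K (delta d (g + 1) c))
      = deltaStep d (fun a => algebraMap ℚ K (delta d g a)) := by
  funext c
  simp only [delta, deltaStep, map_sum, map_mul, map_sub, map_natCast]

theorem altEvenSum_delta_zero {d : ℕ} (hd : 1 ≤ d) :
    altEvenSum d (fun c => algebraMap ℚ K (delta d 0 c)) = 1 := by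
  rw [altEvenSum, sum_eq_single_of_mem 0 (mem_range.2 hd) fun c _ hc => by simp [delta, hc]]
  simp [delta, cheb_zero]

theorem mk_hatK_pow {d : ℕ} (hd : 1 ≤ d) (g : ℕ) :
    Ideal.Quotient.mk (Ideal.span {cheb K d - cheb K (d - 1)})
        (altEvenSum d (fun n => (d : K) - n)) ^ g
      = Ideal.Quotient.mk (Ideal.span {cheb K d - cheb K (d - 1)})
        (altEvenSum d (fun c => algebraMap ℚ K (delta d g c))) := by
  induction g with
  | zero => rw [pow_zero, altEvenSum_delta_zero hd, map_one]
  | succ g ih =>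
    rw [pow_succ', ih, ← mk_altEvenSum_deltaStep hd, ← algebraMap_delta_succ]

end

/-- In the Verlinde algebra `V_p = ℚ(ζ_p)[z]/(e_d - e_{d-1})`, with
`K̂ = ∑_{n=0}^{d-1} (-1)^n (d-n) e_{2n}`, one has for all `g ≥ 0`:
`K̂^g = ∑_{c=0}^{d-1} (-1)^c δ_g^{(2c)} e_{2c}`; equivalently
`(-1)^c δ_g^{(2c)} = M(K̂^g)_{c,0}`. -/
theorem hatK_power (d : ℕ) (hd : 1 ≤ d) (g : ℕ) :
    letI K := CyclotomicField (2 * d + 1) ℚ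
    letI mk := Ideal.Quotient.mk (Ideal.span {cheb K d - cheb K (d - 1)})
    mk (∑ n ∈ Finset.range d,
          Polynomial.C ((-1 : K) ^ n * ((d : K) - n)) * cheb K (2 * n)) ^ g
      = mk (∑ c ∈ Finset.range d,
          Polynomial.C ((-1 : K) ^ c * algebraMap ℚ K (delta d g c)) * cheb K (2 * c)) :=
  mk_hatK_pow hd g
end
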